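/- arXiv:1904.09712 — 4 statements merged into one kernel-verified Lean document; each statement's English description precedes it below -/
import Mathlib

section
/- Let E be a real inner product space and let f, h : E → ℝ be twice continuously differentiable. Suppose D²h(x)(v,v) ≥ σ·‖v‖² for all x, v (σ > 0), and f is L_f-relatively smooth with respect to h, i.e. |D²f(x)(v,v)| ≤ L_f·D²h(x)(v,v) for all x, v. Let 0 < η < 1/L_f, let x⁻ ∈ E, and let x₊ be a global minimizer over E of the function x ↦ ⟪∇f(x⁻), x − x⁻⟫ + (1/η)·D_h(x, x⁻). Then f(x⁻) − f(x₊) ≥ (1/η − L_f)·(σ/2)·‖x₊ − x⁻‖². (Sufficient decrease of one Bregman gradient descent step.) -/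
/-!
Restricted to the segment from `x⁻` to `x₊`, a lower bound on a second derivative yields a lower
bound on the Bregman divergence by the mean value theorem. Thus `D_h(x₊, x⁻) ≥ (σ/2)‖x₊ − x⁻‖²`,
and relative smoothness gives `D_f(x₊, x⁻) ≤ L_f D_h(x₊, x⁻)`. Comparing the step's objective at
`x₊` with its value `0` at `x⁻` gives `⟪∇f(x⁻), x₊ − x⁻⟫ ≤ −(1/η) D_h(x₊, x⁻)`, so
`f(x⁻) − f(x₊) ≥ (1/η − L_f) D_h(x₊, x⁻)`.
-/

open scoped RealInnerProductSpace

theorem half_le_sub_sub_of_le_deriv2 {g g' g'' : ℝ → ℝ} {c : ℝ}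
    (hg : ∀ t, HasDerivAt g (g' t) t) (hg' : ∀ t, HasDerivAt g' (g'' t) t)
    (hc : ∀ t, c ≤ g'' t) :
    c / 2 ≤ g 1 - g 0 - g' 0 := by
  -- `g t - c t² / 2` has a monotone derivative, so its slope on `[0, 1]` is at least its
  -- derivative at `0`.
  have hmono : Monotone fun t => g' t - c * t :=
    monotone_of_hasDerivAt_nonneg
      (fun t => ((hg' t).sub ((hasDerivAt_id t).const_mul c)).congr_deriv (by simp))
      (fun t => sub_nonneg.mpr (hc t))
  obtain ⟨ξ, hξ, hslope⟩ := exists_hasDerivAt_eq_slope (fun t => g t - c / 2 * t ^ 2)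
    (fun t => g' t - c * t) zero_lt_one
    (fun t _ => ((hg t).continuousAt.sub (by fun_prop)).continuousWithinAt)
    (fun t _ => ((hg t).sub (((hasDerivAt_id t).pow 2).const_mul (c / 2))).congr_deriv
      (by simp; ring))
  have hξ0 := hmono hξ.1.le
  simp only at hξ0 hslope
  linarith

section
variable {E F : Type*} [NormedAddCommGroup E] [NormedSpace ℝ E] [NormedAddCommGroup F]
  [NormedSpace ℝ F]

theorem hasDerivAt_comp_add_smul {G : E → F} {x v : E} {t : ℝ}
    (hG : DifferentiableAt ℝ G (x + t • v)) :
    HasDerivAt (fun s : ℝ => G (x + s • v)) (fderiv ℝ G (x + t • v) v) t := by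
  simpa [Function.comp_def] using
    hG.hasFDerivAt.comp_hasDerivAt t (((hasDerivAt_id t).smul_const v).const_add x)

theorem hasDerivAt_fderiv_apply_comp_add_smul {φ : E → ℝ} {x v : E} {t : ℝ}
    (hφ : DifferentiableAt ℝ (fderiv ℝ φ) (x + t • v)) :
    HasDerivAt (fun s : ℝ => fderiv ℝ φ (x + s • v) v)
      (fderiv ℝ (fderiv ℝ φ) (x + t • v) v v) t :=
  (ContinuousLinearMap.apply ℝ ℝ v).hasFDerivAt.comp_hasDerivAt t (hasDerivAt_comp_add_smul hφ)

theorem iteratedFDeriv_two_apply_same (φ : E → F) (x v : E) :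
    iteratedFDeriv ℝ 2 φ x ![v, v] = fderiv ℝ (fderiv ℝ φ) x v v := by
  simp [iteratedFDeriv_two_apply]

theorem half_le_sub_sub_fderiv_of_le_fderiv_fderiv {φ : E → ℝ} (hφ : ContDiff ℝ 2 φ)
    {x y : E} {c : ℝ} (hc : ∀ z, c ≤ fderiv ℝ (fderiv ℝ φ) z (y - x) (y - x)) :
    c / 2 ≤ φ y - φ x - fderiv ℝ φ x (y - x) := by
  have h1 : Differentiable ℝ φ := hφ.differentiable two_ne_zero
  have h2 : Differentiable ℝ (fderiv ℝ φ) :=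
    (hφ.fderiv_right (m := 1) le_rfl).differentiable one_ne_zero
  simpa using half_le_sub_sub_of_le_deriv2 (fun t => hasDerivAt_comp_add_smul (h1 _))
    (fun t => hasDerivAt_fderiv_apply_comp_add_smul (h2 _)) (fun t => hc (x + t • (y - x)))

theorem sub_sub_fderiv_le_mul_of_fderiv_fderiv_le_mul {f h : E → ℝ} (hf : ContDiff ℝ 2 f)
    (hh : ContDiff ℝ 2 h) {x y : E} {L : ℝ}
    (hle : ∀ z, fderiv ℝ (fderiv ℝ f) z (y - x) (y - x) ≤
      L * fderiv ℝ (fderiv ℝ h) z (y - x) (y - x)) :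
    f y - f x - fderiv ℝ f x (y - x) ≤ L * (h y - h x - fderiv ℝ h x (y - x)) := by
  have hf1 : Differentiable ℝ f := hf.differentiable two_ne_zero
  have hh1 : Differentiable ℝ h := hh.differentiable two_ne_zero
  have hf2 : Differentiable ℝ (fderiv ℝ f) :=
    (hf.fderiv_right (m := 1) le_rfl).differentiable one_ne_zero
  have hh2 : Differentiable ℝ (fderiv ℝ h) :=
    (hh.fderiv_right (m := 1) le_rfl).differentiable one_ne_zero
  have hline := half_le_sub_sub_of_le_deriv2 (c := 0)
    (fun t => ((hasDerivAt_comp_add_smul (hh1 _)).const_mul L).sub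
      (hasDerivAt_comp_add_smul (hf1 _)))
    (fun t => ((hasDerivAt_fderiv_apply_comp_add_smul (hh2 _)).const_mul L).sub
      (hasDerivAt_fderiv_apply_comp_add_smul (hf2 _)))
    (fun t => sub_nonneg.mpr (hle (x + t • (y - x))))
  simp only [Pi.sub_apply, zero_smul, add_zero, one_smul, add_sub_cancel, zero_div] at hline
  linarith
end

theorem bregman_gd_sufficient_decrease_general
    {E : Type*} [NormedAddCommGroup E] [InnerProductSpace ℝ E]
    (f h : E → ℝ) (gf gh : E → E) (σ Lf η : ℝ)
    (hf : ContDiff ℝ 2 f) (hh : ContDiff ℝ 2 h)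
    (hgf : ∀ x v : E, fderiv ℝ f x v = ⟪gf x, v⟫)
    (hgh : ∀ x v : E, fderiv ℝ h x v = ⟪gh x, v⟫)
    (hstrong : ∀ x v : E, iteratedFDeriv ℝ 2 h x ![v, v] ≥ σ * ‖v‖ ^ 2)
    (hrel : ∀ x v : E,
      |iteratedFDeriv ℝ 2 f x ![v, v]| ≤ Lf * iteratedFDeriv ℝ 2 h x ![v, v])
    (hη0 : 0 < η) (hη1 : η < 1 / Lf)
    (xm xp : E)
    (hmin : ∀ x : E,
      ⟪gf xm, xp - xm⟫ + (1 / η) * (h xp - h xm - ⟪gh xm, xp - xm⟫) ≤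
        ⟪gf xm, x - xm⟫ + (1 / η) * (h x - h xm - ⟪gh xm, x - xm⟫)) :
    f xm - f xp ≥ (1 / η - Lf) * (σ / 2) * ‖xp - xm‖ ^ 2 := by
  simp only [iteratedFDeriv_two_apply_same] at hstrong hrel
  have hstep : ⟪gf xm, xp - xm⟫ + (1 / η) * (h xp - h xm - ⟪gh xm, xp - xm⟫) ≤ 0 := by
    simpa using hmin xm
  have hh_strong : σ * ‖xp - xm‖ ^ 2 / 2 ≤ h xp - h xm - ⟪gh xm, xp - xm⟫ := by
    simpa [hgh] using half_le_sub_sub_fderiv_of_le_fderiv_fderiv hh fun z => hstrong z (xp - xm)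
  have hf_smooth : f xp - f xm - ⟪gf xm, xp - xm⟫ ≤ Lf * (h xp - h xm - ⟪gh xm, xp - xm⟫) := by
    simpa [hgf, hgh] using
      sub_sub_fderiv_le_mul_of_fderiv_fderiv_le_mul hf hh fun z => (abs_le.mp (hrel z (xp - xm))).2
  have hgap : 0 ≤ 1 / η - Lf := by
    rcases le_or_gt Lf 0 with hL | hL
    · linarith [one_div_pos.mpr hη0]
    · rw [lt_one_div hη0 hL] at hη1
      linarith
  linarith [mul_le_mul_of_nonneg_left hh_strong hgap]

/-- **Sufficient decrease of one Bregman gradient descent step.**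
If `h` is `σ`-strongly convex in the second-order sense (`D²h(x)(v,v) ≥ σ‖v‖²`),
`f` is `L_f`-relatively smooth w.r.t. `h`, `0 < η < 1/L_f`, and `x₊` globally minimizes
`x ↦ ⟪∇f(x⁻), x − x⁻⟫ + (1/η) D_h(x, x⁻)`, then
`f(x⁻) − f(x₊) ≥ (1/η − L_f)(σ/2)‖x₊ − x⁻‖²`. -/
theorem bregman_gd_sufficient_decrease
    {E : Type*} [NormedAddCommGroup E] [InnerProductSpace ℝ E]
    (f h : E → ℝ) (gf gh : E → E) (σ Lf η : ℝ)
    (hf : ContDiff ℝ 2 f) (hh : ContDiff ℝ 2 h)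
    (hgf : ∀ x v : E, fderiv ℝ f x v = ⟪gf x, v⟫)
    (hgh : ∀ x v : E, fderiv ℝ h x v = ⟪gh x, v⟫)
    (hσ : 0 < σ)
    (hstrong : ∀ x v : E, iteratedFDeriv ℝ 2 h x ![v, v] ≥ σ * ‖v‖ ^ 2)
    (hrel : ∀ x v : E,
      |iteratedFDeriv ℝ 2 f x ![v, v]| ≤ Lf * iteratedFDeriv ℝ 2 h x ![v, v])
    (hη0 : 0 < η) (hη1 : η < 1 / Lf)
    (xm xp : E)
    (hmin : ∀ x : E,
      ⟪gf xm, xp - xm⟫ + (1 / η) * (h xp - h xm - ⟪gh xm, xp - xm⟫) ≤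
        ⟪gf xm, x - xm⟫ + (1 / η) * (h x - h xm - ⟪gh xm, x - xm⟫)) :
    f xm - f xp ≥ (1 / η - Lf) * (σ / 2) * ‖xp - xm‖ ^ 2 :=
  bregman_gd_sufficient_decrease_general f h gf gh σ Lf η hf hh hgf hgh hstrong hrel hη0 hη1 xm xp
    hmin
end

section
/- Let n ≥ 1 and d ≥ 2 be natural numbers, let α, σ > 0, let p be a multivariate real polynomial in n variables of total degree at most d, and let f : ℝⁿ → ℝ (with ℝⁿ the Euclidean space) be the evaluation map f(x) = p(x₁, …, xₙ). Define h : ℝⁿ → ℝ by h(x) = (α/d)·‖x‖^d + (σ/2)·‖x‖² + 1. Then there exists L > 0 such that f is L-relatively smooth with respect to h, i.e. |D²f(x)(v,v)| ≤ L·D²h(x)(v,v) for all x, v ∈ ℝⁿ. -/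
/-!
The Hessian of `h` dominates `(α ‖x‖ ^ (d - 2) + σ) ‖v‖ ^ 2`: the gradient of `‖x‖ ^ d / d` is
`‖x‖ ^ (d - 2) x`, whose derivative is `‖x‖ ^ (d - 2)` times the identity plus the positive
semidefinite rank-one term `(d - 2) ‖x‖ ^ (d - 4) x xᵀ`. The Hessian of `p` has the entries
`∂ᵢ∂ⱼp`, polynomials of degree at most `d - 2`, so it is bounded by
`C (1 + ‖x‖) ^ (d - 2) ≤ C 2 ^ (d - 3) (1 + ‖x‖ ^ (d - 2))`.
-/

open MvPolynomial Asymptotics Topology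
open scoped RealInnerProductSpace

namespace MvPolynomial

variable {ι : Type*}

theorem totalDegree_pderiv_le (i : ι) (p : MvPolynomial ι ℝ) :
    (pderiv i p).totalDegree ≤ p.totalDegree - 1 := by
  refine Finset.sup_le fun m hm => ?_
  have hcoeff : coeff (m + Finsupp.single i 1) p ≠ 0 := by
    rw [mem_support_iff, coeff_pderiv] at hm
    exact left_ne_zero_of_mul hm
  have := le_totalDegree (mem_support_iff.mpr hcoeff)
  rw [Finsupp.sum_add_index' (fun _ => rfl) (fun _ _ _ => rfl),
    Finsupp.sum_single_index rfl] at this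
  omega

theorem abs_eval_le (q : MvPolynomial ι ℝ) {y : ι → ℝ} {R : ℝ} (hR : 1 ≤ R)
    (hy : ∀ i, |y i| ≤ R) :
    |eval y q| ≤ (∑ s ∈ q.support, |coeff s q|) * R ^ q.totalDegree := by
  rw [eval_eq, Finset.sum_mul]
  refine (Finset.abs_sum_le_sum_abs _ _).trans (Finset.sum_le_sum fun s hs => ?_)
  rw [abs_mul, Finset.abs_prod]
  gcongr
  calc ∏ i ∈ s.support, |y i ^ s i| ≤ ∏ i ∈ s.support, R ^ s i := by
        gcongr with i
        rw [abs_pow]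
        exact pow_le_pow_left₀ (abs_nonneg _) (hy i) _
    _ = R ^ s.sum fun _ e => e := Finset.prod_pow_eq_pow_sum _ _ _
    _ ≤ R ^ q.totalDegree := pow_le_pow_right₀ hR (le_totalDegree hs)

variable [Fintype ι] {F : Type*} [NormedAddCommGroup F] [NormedSpace ℝ F]

theorem hasFDerivAt_eval_comp (ℓ : ι → F →L[ℝ] ℝ) (p : MvPolynomial ι ℝ) (x : F) :
    HasFDerivAt (fun x => eval (fun i => ℓ i x) p)
      (∑ i, eval (fun j => ℓ j x) (pderiv i p) • ℓ i) x := by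
  classical
  induction p using MvPolynomial.induction_on with
  | C a => simpa [pderiv_C] using hasFDerivAt_const a x
  | add p q hp hq =>
    simpa only [map_add, add_smul, Finset.sum_add_distrib] using hp.fun_add hq
  | mul_X p k hp =>
    simp only [map_mul, eval_X]
    refine (hp.fun_mul (ℓ k).hasFDerivAt).congr_fderiv ?_
    simp [pderiv_X, Pi.single_apply, apply_ite (eval _), add_smul, Finset.sum_add_distrib,
      Finset.smul_sum, mul_smul]

theorem iteratedFDeriv_two_eval_comp (ℓ : ι → F →L[ℝ] ℝ) (p : MvPolynomial ι ℝ) (x v w : F) :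
    iteratedFDeriv ℝ 2 (fun x => eval (fun i => ℓ i x) p) x ![v, w] =
      ∑ i, ∑ j, eval (fun k => ℓ k x) (pderiv j (pderiv i p)) * ℓ j v * ℓ i w := by
  have hD : fderiv ℝ (fun x => eval (fun i => ℓ i x) p) =
      fun y => ∑ i, eval (fun j => ℓ j y) (pderiv i p) • ℓ i := by
    funext y
    exact (hasFDerivAt_eval_comp ℓ p y).fderiv
  have hD2 := HasFDerivAt.fun_sum (u := Finset.univ) fun i _ =>
    (hasFDerivAt_eval_comp ℓ (pderiv i p) x).smul_const (ℓ i)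
  rw [iteratedFDeriv_two_apply, hD, hD2.fderiv]
  simp [Finset.sum_mul]

theorem exists_abs_iteratedFDeriv_two_eval_le (p : MvPolynomial ι ℝ) {d : ℕ}
    (hdeg : p.totalDegree ≤ d) :
    ∃ C : ℝ, 0 < C ∧ ∀ x v : EuclideanSpace ℝ ι,
      |iteratedFDeriv ℝ 2 (fun x : EuclideanSpace ℝ ι => eval (fun i => x i) p) x ![v, v]| ≤
        C * (1 + ‖x‖) ^ (d - 2) * ‖v‖ ^ 2 := by
  set c : ι → ι → ℝ := fun i j => ∑ s ∈ (pderiv j (pderiv i p)).support,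
    |coeff s (pderiv j (pderiv i p))|
  refine ⟨∑ i, ∑ j, c i j + 1, by positivity, fun x v => ?_⟩
  have hcoord (y : EuclideanSpace ℝ ι) (i : ι) : |y i| ≤ ‖y‖ := by
    simpa using PiLp.norm_apply_le y i
  have hR : 1 ≤ 1 + ‖x‖ := le_add_of_nonneg_right (norm_nonneg x)
  have heval (i j : ι) :
      |eval (fun k => x k) (pderiv j (pderiv i p))| ≤ c i j * (1 + ‖x‖) ^ (d - 2) := by
    refine (abs_eval_le _ hR fun k => (hcoord x k).trans (by linarith)).trans ?_
    have := (totalDegree_pderiv_le j _).trans (Nat.sub_le_sub_right (totalDegree_pderiv_le i p) 1)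
    gcongr
    omega
  rw [show (fun x : EuclideanSpace ℝ ι => eval (fun i => x i) p) =
    fun x => eval (fun i => EuclideanSpace.proj i x) p from rfl, iteratedFDeriv_two_eval_comp]
  calc _ ≤ ∑ i, ∑ j, |eval (fun k => x k) (pderiv j (pderiv i p)) * v j * v i| :=
        (Finset.abs_sum_le_sum_abs _ _).trans
          (Finset.sum_le_sum fun i _ => Finset.abs_sum_le_sum_abs _ _)
    _ ≤ ∑ i, ∑ j, c i j * (1 + ‖x‖) ^ (d - 2) * ‖v‖ * ‖v‖ := by
        gcongr with i _ j _
        rw [abs_mul, abs_mul]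
        gcongr
        exacts [heval i j, hcoord v j, hcoord v i]
    _ = (∑ i, ∑ j, c i j) * (1 + ‖x‖) ^ (d - 2) * ‖v‖ ^ 2 := by
        simp only [Finset.sum_mul, mul_assoc, sq]
    _ ≤ _ := by gcongr; linarith

end MvPolynomial

section NormPowKernel

variable {E : Type*} [NormedAddCommGroup E] [InnerProductSpace ℝ E]

theorem hasFDerivAt_norm_rpow_of_ne_zero {x : E} (hx : x ≠ 0) (q : ℝ) :
    HasFDerivAt (fun y : E => ‖y‖ ^ q) ((q * ‖x‖ ^ (q - 2)) • innerSL ℝ x) x := by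
  have hsq : (fun y : E => ‖y‖ ^ q) = fun y => (‖y‖ ^ 2) ^ (q / 2) := by
    funext y
    rw [← Real.rpow_natCast, ← Real.rpow_mul (norm_nonneg y)]
    ring_nf
  rw [hsq]
  refine ((hasFDerivAt_id x).norm_sq.rpow_const (.inl (by simpa using hx))).congr_fderiv ?_
  rw [id_eq, ← Real.rpow_natCast, ← Real.rpow_mul (norm_nonneg x)]
  ext v
  simp only [ContinuousLinearMap.comp_id, smul_apply, coe_innerSL_apply, nsmul_eq_mul,
    smul_eq_mul, Nat.cast_ofNat]
  ring_nf

theorem hasFDerivAt_norm_rpow_smul_self {q : ℝ} (hq : 0 ≤ q) (x : E) :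
    HasFDerivAt (fun y : E => ‖y‖ ^ q • y)
      (‖x‖ ^ q • ContinuousLinearMap.id ℝ E + (q * ‖x‖ ^ (q - 2)) • (innerSL ℝ x).smulRight x)
      x := by
  rcases eq_or_ne x 0 with rfl | hx
  · rcases hq.eq_or_lt with rfl | hq
    · simp only [Real.rpow_zero, one_smul, zero_mul, zero_smul, add_zero]
      exact hasFDerivAt_id _
    simp only [norm_zero, Real.zero_rpow hq.ne', zero_smul, map_zero,
      ContinuousLinearMap.zero_smulRight, smul_zero, add_zero]
    refine .of_isLittleO ?_
    have hlim : (fun y : E => ‖y‖ ^ q) =o[𝓝 0] (fun _ => (1 : ℝ)) := by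
      refine (isLittleO_const_iff one_ne_zero).mpr ?_
      have hcont : ContinuousAt (fun y : E => ‖y‖ ^ q) 0 :=
        continuousAt_id.norm.rpow_const (.inr hq.le)
      simpa [Real.zero_rpow hq.ne'] using hcont.tendsto
    simpa using hlim.smul_isBigO (isBigO_refl (fun y : E => y) (𝓝 0))
  · refine ((hasFDerivAt_norm_rpow_of_ne_zero hx q).smul (hasFDerivAt_id x)).congr_fderiv ?_
    ext v
    simp [mul_smul]

theorem hasFDerivAt_norm_rpow_add_norm_sq (α σ c : ℝ) {p : ℝ} (hp : 1 < p) (y : E) :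
    HasFDerivAt (fun y : E => α / p * ‖y‖ ^ p + σ / 2 * ‖y‖ ^ 2 + c)
      (innerSL ℝ (α • ‖y‖ ^ (p - 2) • y + σ • y)) y := by
  refine ((((hasFDerivAt_norm_rpow y hp).const_mul (α / p)).add
    ((hasFDerivAt_id y).norm_sq.const_mul (σ / 2))).add_const c).congr_fderiv ?_
  ext v
  have hp0 : p ≠ 0 := by positivity
  simp only [id_eq, ContinuousLinearMap.comp_id, add_apply, smul_apply, coe_innerSL_apply,
    smul_eq_mul, nsmul_eq_mul, Nat.cast_ofNat, map_add, map_smul]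
  field_simp

theorem le_iteratedFDeriv_two_norm_rpow_add_norm_sq {α : ℝ} (hα : 0 ≤ α) (σ c : ℝ) {p : ℝ}
    (hp : 2 ≤ p) (x v : E) :
    α * ‖x‖ ^ (p - 2) * ‖v‖ ^ 2 + σ * ‖v‖ ^ 2 ≤
      iteratedFDeriv ℝ 2 (fun y : E => α / p * ‖y‖ ^ p + σ / 2 * ‖y‖ ^ 2 + c) x ![v, v] := by
  have hD : fderiv ℝ (fun y : E => α / p * ‖y‖ ^ p + σ / 2 * ‖y‖ ^ 2 + c) =
      fun y => innerSL ℝ (α • ‖y‖ ^ (p - 2) • y + σ • y) := by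
    funext y
    exact (hasFDerivAt_norm_rpow_add_norm_sq α σ c (by linarith) y).fderiv
  have hG : HasFDerivAt (fun y : E => α • ‖y‖ ^ (p - 2) • y + σ • y) _ x :=
    ((hasFDerivAt_norm_rpow_smul_self (sub_nonneg.2 hp) x).fun_const_smul α).fun_add
      ((hasFDerivAt_id x).fun_const_smul σ)
  have hH : HasFDerivAt (fun y : E => innerSL ℝ (α • ‖y‖ ^ (p - 2) • y + σ • y)) _ x :=
    (innerSL ℝ).hasFDerivAt.comp x hG
  have hcross : 0 ≤ α * ((p - 2) * ‖x‖ ^ (p - 2 - 2) * ⟪x, v⟫ ^ 2) := by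
    have := sub_nonneg.2 hp
    positivity
  rw [iteratedFDeriv_two_apply, hD, hH.fderiv]
  calc _ ≤ α * (‖x‖ ^ (p - 2) * ‖v‖ ^ 2 + (p - 2) * ‖x‖ ^ (p - 2 - 2) * ⟪x, v⟫ ^ 2)
        + σ * ‖v‖ ^ 2 := by linarith
    _ = _ := by
        simp only [ContinuousLinearMap.comp_apply, add_apply, smul_apply,
          ContinuousLinearMap.smulRight_apply, ContinuousLinearMap.id_apply, Matrix.cons_val_zero,
          Matrix.cons_val_one, Matrix.cons_val_fin_one, map_add, map_smul, smul_eq_mul]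
        rw [innerSL_apply_apply, innerSL_apply_apply, real_inner_self_eq_norm_sq]
        ring

end NormPowKernel

theorem polynomial_relatively_smooth_general
    (n d : ℕ) (hd : 2 ≤ d) (α σ : ℝ) (hα : 0 < α) (hσ : 0 < σ)
    (p : MvPolynomial (Fin n) ℝ) (hdeg : p.totalDegree ≤ d)
    (f : EuclideanSpace ℝ (Fin n) → ℝ)
    (hf : ∀ x : EuclideanSpace ℝ (Fin n), f x = MvPolynomial.eval (fun i => x i) p)
    (h : EuclideanSpace ℝ (Fin n) → ℝ)
    (hdef : ∀ x : EuclideanSpace ℝ (Fin n),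
      h x = (α / d) * ‖x‖ ^ d + (σ / 2) * ‖x‖ ^ 2 + 1) :
    ∃ L : ℝ, 0 < L ∧ ∀ (x v : EuclideanSpace ℝ (Fin n)),
      |iteratedFDeriv ℝ 2 f x ![v, v]| ≤ L * iteratedFDeriv ℝ 2 h x ![v, v] := by
  obtain ⟨C, hC, hf_bound⟩ := exists_abs_iteratedFDeriv_two_eval_le p hdeg
  obtain rfl : f = fun x => eval (fun i => x i) p := funext hf
  obtain rfl : h = fun y => α / d * ‖y‖ ^ (d : ℝ) + σ / 2 * ‖y‖ ^ 2 + 1 :=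
    funext fun y => by rw [hdef, Real.rpow_natCast]
  set m := min α σ
  have hm : 0 < m := lt_min hα hσ
  refine ⟨C * 2 ^ (d - 2 - 1) / m, by positivity, fun x v => ?_⟩
  have hh_bound := le_iteratedFDeriv_two_norm_rpow_add_norm_sq hα.le σ 1
    (p := d) (by exact_mod_cast hd) x v
  have hpow : ‖x‖ ^ ((d : ℝ) - 2) = ‖x‖ ^ (d - 2) := by
    rw [← Real.rpow_natCast, Nat.cast_sub hd, Nat.cast_ofNat]
  rw [hpow] at hh_bound
  have hsplit := add_pow_le zero_le_one (norm_nonneg x) (d - 2)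
  rw [one_pow] at hsplit
  calc _ ≤ C * (1 + ‖x‖) ^ (d - 2) * ‖v‖ ^ 2 := hf_bound x v
    _ ≤ C * (2 ^ (d - 2 - 1) * (1 + ‖x‖ ^ (d - 2))) * ‖v‖ ^ 2 := by gcongr
    _ = C * 2 ^ (d - 2 - 1) / m * (m * (1 + ‖x‖ ^ (d - 2)) * ‖v‖ ^ 2) := by field_simp
    _ ≤ C * 2 ^ (d - 2 - 1) / m * (α * ‖x‖ ^ (d - 2) * ‖v‖ ^ 2 + σ * ‖v‖ ^ 2) := by
        have hxv : 0 ≤ ‖x‖ ^ (d - 2) * ‖v‖ ^ 2 := by positivity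
        gcongr
        nlinarith [mul_le_mul_of_nonneg_right (min_le_left α σ) hxv,
          mul_le_mul_of_nonneg_right (min_le_right α σ) (sq_nonneg ‖v‖)]
    _ ≤ _ := by gcongr

/-- Any multivariate real polynomial `p` of total degree at most `d` (`n ≥ 1`, `d ≥ 2`),
viewed as a function `f` on Euclidean space, is `L`-relatively smooth with respect to the
kernel `h(x) = (α/d)‖x‖^d + (σ/2)‖x‖² + 1` for some `L > 0`. -/
theorem polynomial_relatively_smooth
    (n d : ℕ) (hn : 1 ≤ n) (hd : 2 ≤ d) (α σ : ℝ) (hα : 0 < α) (hσ : 0 < σ)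
    (p : MvPolynomial (Fin n) ℝ) (hdeg : p.totalDegree ≤ d)
    (f : EuclideanSpace ℝ (Fin n) → ℝ)
    (hf : ∀ x : EuclideanSpace ℝ (Fin n), f x = MvPolynomial.eval (fun i => x i) p)
    (h : EuclideanSpace ℝ (Fin n) → ℝ)
    (hdef : ∀ x : EuclideanSpace ℝ (Fin n),
      h x = (α / d) * ‖x‖ ^ d + (σ / 2) * ‖x‖ ^ 2 + 1) :
    ∃ L : ℝ, 0 < L ∧ ∀ (x v : EuclideanSpace ℝ (Fin n)),
      |iteratedFDeriv ℝ 2 f x ![v, v]| ≤ L * iteratedFDeriv ℝ 2 h x ![v, v] :=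
  polynomial_relatively_smooth_general n d hd α σ hα hσ p hdeg f hf h hdef
end

section
/- Let E be a real inner product space, let h : E → ℝ be given by h(x) = ‖x‖⁴/4 + ‖x‖²/2 + 1, let η > 0, and let g, x⁻ ∈ E. Then the point x₊ := Π((‖x⁻‖² + 1)·x⁻ − η·g), with Π as defined below, is the unique global minimizer over E of the function ψ(x) := ⟪g, x − x⁻⟫ + (1/η)·(h(x) − h(x⁻) − ⟪(‖x⁻‖² + 1)·x⁻, x − x⁻⟫). (Closed-form implementation of the Bregman gradient descent step for a fourth-degree Bregman kernel, with g = ∇f(x⁻).) -/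
/-!
Up to the positive factor `1/η` and an additive constant, `ψ` is the potential
`x ↦ ‖x‖⁴/4 + ‖x‖²/2 - ⟪w, x⟫` with `w = (‖x⁻‖² + 1)x⁻ - ηg`. By Cauchy–Schwarz this is at least
`r⁴/4 + r²/2 - ‖w‖r` for `r = ‖x‖`, a strictly convex function of `r ≥ 0` minimised exactly at the
root `t` of `t³ + t = ‖w‖`, and both bounds are attained only at `x = (t/‖w‖)•w = Π(w)`. Cardano's
formula shows that `τ(‖w‖)` is this root.
-/

open scoped RealInnerProductSpace

/-- The explicit formula for the unique real root of the cubic `t³ + t = a`. -/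
noncomputable def tau (a : ℝ) : ℝ :=
  ((2 : ℝ) ^ ((1 : ℝ) / 3) * (Real.sqrt (81 * a ^ 2 + 12) + 9 * a) ^ ((2 : ℝ) / 3) -
      2 * (3 : ℝ) ^ ((1 : ℝ) / 3)) /
    ((6 : ℝ) ^ ((2 : ℝ) / 3) * (Real.sqrt (81 * a ^ 2 + 12) + 9 * a) ^ ((1 : ℝ) / 3))

/-- The rescaling map `Π(w) = (τ(‖w‖)/‖w‖)·w` (and `Π(0) = 0`). -/
noncomputable def Pi' {E : Type*} [NormedAddCommGroup E] [InnerProductSpace ℝ E]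
    (w : E) : E :=
  letI := Classical.dec (w = 0)
  if w = 0 then 0 else (tau ‖w‖ / ‖w‖) • w

theorem rpow_one_third_pow_three {x : ℝ} (hx : 0 ≤ x) : (x ^ (1 / 3 : ℝ)) ^ 3 = x := by
  simpa [one_div] using Real.rpow_inv_natCast_pow hx three_ne_zero

theorem rpow_two_thirds {x : ℝ} (hx : 0 ≤ x) : x ^ (2 / 3 : ℝ) = (x ^ (1 / 3 : ℝ)) ^ 2 := by
  rw [← Real.rpow_mul_natCast hx]
  norm_num

theorem cardano_radicand_pos (a : ℝ) : 0 < √(81 * a ^ 2 + 12) + 9 * a := by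
  have h : |9 * a| < √(81 * a ^ 2 + 12) := by
    rw [← Real.sqrt_sq_eq_abs]
    exact Real.sqrt_lt_sqrt (sq_nonneg _) (by nlinarith)
  linarith [neg_abs_le (9 * a)]

/-- Cardano's substitution `t = m - 1/(3m)` for the depressed cubic `t³ + t`. -/
theorem sub_inv_pow_three_add_self {m : ℝ} (hm : m ≠ 0) :
    (m - (3 * m)⁻¹) ^ 3 + (m - (3 * m)⁻¹) = m ^ 3 - (27 * m ^ 3)⁻¹ := by
  field_simp
  ring

theorem tau_eq_sub_inv (a : ℝ) :
    ∃ m : ℝ, 18 * m ^ 3 = √(81 * a ^ 2 + 12) + 9 * a ∧ tau a = m - (3 * m)⁻¹ := by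
  set c := √(81 * a ^ 2 + 12) + 9 * a
  have hc : 0 < c := cardano_radicand_pos a
  set p := (2 : ℝ) ^ (1 / 3 : ℝ)
  set q := (3 : ℝ) ^ (1 / 3 : ℝ)
  set s := c ^ (1 / 3 : ℝ)
  have hp : p ^ 3 = 2 := rpow_one_third_pow_three (by norm_num)
  have hq : q ^ 3 = 3 := rpow_one_third_pow_three (by norm_num)
  have hs : s ^ 3 = c := rpow_one_third_pow_three hc.le
  have h6 : (6 : ℝ) ^ (2 / 3 : ℝ) = (p * q) ^ 2 := by
    rw [rpow_two_thirds (by norm_num), show (6 : ℝ) = 2 * 3 by norm_num,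
      Real.mul_rpow (by norm_num) (by norm_num)]
  have hp0 : 0 < p := by positivity
  have hq0 : 0 < q := by positivity
  have hs0 : 0 < s := by positivity
  have htau : tau a = (p * s ^ 2 - 2 * q) / ((p * q) ^ 2 * s) := by
    rw [tau, rpow_two_thirds hc.le, h6]
  clear_value c p q s
  refine ⟨s / (p * q ^ 2), ?_, ?_⟩
  · field_simp
    linear_combination (-c * q ^ 6) * hp + 18 * hs - (2 * c * (q ^ 3 + 3)) * hq
  · rw [htau]
    field_simp
    linear_combination q ^ 4 * hp + 2 * q * hq

theorem tau_pow_three_add_self (a : ℝ) : tau a ^ 3 + tau a = a := by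
  obtain ⟨m, hm, hτ⟩ := tau_eq_sub_inv a
  have hm0 : m ≠ 0 := by
    rintro rfl
    linarith [cardano_radicand_pos a]
  have hsq := Real.sq_sqrt (by positivity : (0 : ℝ) ≤ 81 * a ^ 2 + 12)
  rw [hτ, sub_inv_pow_three_add_self hm0]
  field_simp
  linear_combination (18 * m ^ 3 + √(81 * a ^ 2 + 12) + 9 * a - 18 * a) / 12 * hm + hsq / 12

theorem tau_zero : tau 0 = 0 := by
  have h := tau_pow_three_add_self 0
  nlinarith [sq_nonneg (tau 0)]

theorem tau_nonneg {a : ℝ} (ha : 0 ≤ a) : 0 ≤ tau a := by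
  have h := tau_pow_three_add_self a
  nlinarith [sq_nonneg (tau a)]

section Pi'

variable {E : Type*} [NormedAddCommGroup E] [InnerProductSpace ℝ E]

theorem Pi'_eq_smul (w : E) : Pi' w = (tau ‖w‖ / ‖w‖) • w := by
  unfold Pi'
  split_ifs with hw <;> simp [hw]

theorem norm_Pi' (w : E) : ‖Pi' w‖ = tau ‖w‖ := by
  rcases eq_or_ne w 0 with rfl | hw
  · simp [Pi'_eq_smul, tau_zero]
  · have hw' : 0 < ‖w‖ := norm_pos_iff.mpr hw
    rw [Pi'_eq_smul, norm_smul, Real.norm_eq_abs, abs_of_nonneg (by positivity [tau_nonneg hw'.le])]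
    field_simp

theorem inner_Pi' (w : E) : ⟪w, Pi' w⟫ = tau ‖w‖ * ‖w‖ := by
  rcases eq_or_ne w 0 with rfl | hw
  · simp [Pi'_eq_smul]
  · rw [Pi'_eq_smul, real_inner_smul_right, real_inner_self_eq_norm_sq]
    field_simp [norm_ne_zero_iff.mpr hw]

theorem eq_Pi'_of_norm_eq_of_inner_eq {w x : E} (hn : ‖x‖ = tau ‖w‖)
    (hi : ⟪w, x⟫ = ‖w‖ * ‖x‖) : x = Pi' w := by
  rcases eq_or_ne w 0 with rfl | hw
  · simpa [Pi'_eq_smul, tau_zero] using hn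
  · rw [Pi'_eq_smul, ← hn, div_eq_inv_mul, mul_smul, (inner_eq_norm_mul_iff_real.mp hi), smul_smul,
      inv_mul_cancel₀ (norm_ne_zero_iff.mpr hw), one_smul]

end Pi'

theorem quartic_lt_of_ne {r t : ℝ} (hr : 0 ≤ r) (ht : 0 ≤ t) (hrt : r ≠ t) :
    t ^ 4 / 4 + t ^ 2 / 2 - (t ^ 3 + t) * t < r ^ 4 / 4 + r ^ 2 / 2 - (t ^ 3 + t) * r := by
  have hgap : r ^ 4 / 4 + r ^ 2 / 2 - (t ^ 3 + t) * r - (t ^ 4 / 4 + t ^ 2 / 2 - (t ^ 3 + t) * t) =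
      (r - t) ^ 2 * (r ^ 2 + 2 * r * t + 3 * t ^ 2 + 2) / 4 := by ring
  have hpos : 0 < (r - t) ^ 2 * (r ^ 2 + 2 * r * t + 3 * t ^ 2 + 2) / 4 := by
    have := sub_ne_zero.mpr hrt
    positivity
  linarith

section Potential

variable {E : Type*} [NormedAddCommGroup E] [InnerProductSpace ℝ E]

noncomputable def quarticPotential (w x : E) : ℝ := ‖x‖ ^ 4 / 4 + ‖x‖ ^ 2 / 2 - ⟪w, x⟫

theorem quarticPotential_Pi'_lt {w x : E} (hx : x ≠ Pi' w) :
    quarticPotential w (Pi' w) < quarticPotential w x := by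
  set t := tau ‖w‖
  have hwt : ‖w‖ = t ^ 3 + t := (tau_pow_three_add_self ‖w‖).symm
  have hmin : quarticPotential w (Pi' w) = t ^ 4 / 4 + t ^ 2 / 2 - (t ^ 3 + t) * t := by
    rw [quarticPotential, norm_Pi', inner_Pi', ← hwt]
    ring
  have hCS : ⟪w, x⟫ ≤ ‖w‖ * ‖x‖ := real_inner_le_norm w x
  rw [hmin, quarticPotential]
  rcases eq_or_ne ‖x‖ t with hxt | hxt
  · have hlt : ⟪w, x⟫ < ‖w‖ * ‖x‖ :=
      hCS.lt_of_ne fun heq => hx (eq_Pi'_of_norm_eq_of_inner_eq hxt heq)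
    rw [hxt, hwt] at hlt
    rw [hxt]
    linarith
  · have := quartic_lt_of_ne (norm_nonneg x) (tau_nonneg (norm_nonneg w)) hxt
    rw [hwt] at hCS
    linarith

end Potential

theorem forall_le_and_unique_of_forall_ne_lt {α β : Type*} [LinearOrder β] {f : α → β} {p : α}
    (h : ∀ x ≠ p, f p < f x) :
    (∀ x, f p ≤ f x) ∧ ∀ x', (∀ x, f x' ≤ f x) → x' = p :=
  ⟨fun x => (eq_or_ne x p).elim (fun e => e ▸ le_rfl) fun hne => (h x hne).le,
    fun x' hx' => by_contra fun hne => (h x' hne).not_ge (hx' p)⟩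

/-- **Closed-form implementation of the B-GD step for the fourth-degree kernel**
`h(x) = ‖x‖⁴/4 + ‖x‖²/2 + 1`: the point `x₊ = Π((‖x⁻‖² + 1)x⁻ − ηg)` is the unique
global minimizer of `ψ(x) = ⟪g, x − x⁻⟫ + (1/η)(h(x) − h(x⁻) − ⟪(‖x⁻‖² + 1)x⁻, x − x⁻⟫)`. -/
theorem bgd_closed_form_fourth_degree
    {E : Type*} [NormedAddCommGroup E] [InnerProductSpace ℝ E]
    (h : E → ℝ) (hdef : ∀ x : E, h x = ‖x‖ ^ 4 / 4 + ‖x‖ ^ 2 / 2 + 1)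
    (η : ℝ) (hη : 0 < η) (g xm : E)
    (ψ : E → ℝ)
    (hψ : ∀ x : E, ψ x = ⟪g, x - xm⟫ +
      (1 / η) * (h x - h xm - ⟪(‖xm‖ ^ 2 + 1) • xm, x - xm⟫)) :
    (∀ x : E, ψ (Pi' ((‖xm‖ ^ 2 + 1) • xm - η • g)) ≤ ψ x) ∧
      ∀ x' : E, (∀ x : E, ψ x' ≤ ψ x) → x' = Pi' ((‖xm‖ ^ 2 + 1) • xm - η • g) := by
  set w := (‖xm‖ ^ 2 + 1) • xm - η • g
  have hψ_sub : ∀ x y, ψ x - ψ y = (quarticPotential w x - quarticPotential w y) / η := by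
    intro x y
    simp only [hψ, hdef, quarticPotential, w, inner_sub_right, inner_sub_left, real_inner_smul_left]
    field_simp
    ring
  refine forall_le_and_unique_of_forall_ne_lt fun x hx => ?_
  have hgap := div_pos (sub_pos.mpr (quarticPotential_Pi'_lt hx)) hη
  linarith [hψ_sub x (Pi' w)]
end

section
/- Let n, m ≥ 1, let H₁, F₁₁ be real symmetric n×n matrices, H₂, F₂₂ real symmetric m×m matrices, and F₁₂ a real n×m matrix, let η > 0, and suppose H₁ + η·F₁₁ and H₂ + η·F₂₂ are positive definite and the symmetric block matrix F := [[F₁₁, F₁₂], [F₁₂ᵀ, F₂₂]] has a negative direction, i.e. there exists z ≠ 0 with zᵀFz < 0. Then there exists a real number μ > 1 such that the block matrix J(μ) := [[(μ−1)·H₁ + μ·η·F₁₁, √μ·η·F₁₂], [√μ·η·F₁₂ᵀ, (μ−1)·H₂ + μ·η·F₂₂]] is singular, i.e. det(J(μ)) = 0. (Key matrix lemma showing strict saddles are unstable fixed points of Bregman proximal alternating minimization.) -/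
/-!
`J(1) = η F` has a negative direction, while for `μ = s²` the matrix
`J(s²) = s² diag(H₁ + ηF₁₁, H₂ + ηF₂₂) + s (off-diagonal part) - diag(H₁, H₂)` is positive
definite once `s` is large. The least value of the quadratic form of `J(μ)` on the unit sphere
depends continuously on `μ`, so it vanishes at some `μ > 1`; there `J(μ)` is positive
semidefinite and the minimiser is a nonzero null vector.
-/

open Matrix Metric Filter Set

namespace Matrix

variable {ι : Type*} [Fintype ι]

lemma exists_mem_sphere_dotProduct_mulVec_eq (M : Matrix ι ι ℝ) {z : ι → ℝ} (hz : z ≠ 0) :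
    ∃ w ∈ sphere (0 : ι → ℝ) 1, z ⬝ᵥ M *ᵥ z = ‖z‖ ^ 2 * (w ⬝ᵥ M *ᵥ w) := by
  refine ⟨‖z‖⁻¹ • z, by simpa using norm_smul_inv_norm (𝕜 := ℝ) hz, ?_⟩
  have hz' : ‖z‖ ≠ 0 := norm_ne_zero_iff.mpr hz
  rw [mulVec_smul, dotProduct_smul, smul_dotProduct, smul_eq_mul, smul_eq_mul]
  field_simp

lemma dotProduct_mulVec_pos_of_forall_sphere {M : Matrix ι ι ℝ}
    (h : ∀ w ∈ sphere (0 : ι → ℝ) 1, 0 < w ⬝ᵥ M *ᵥ w) {z : ι → ℝ} (hz : z ≠ 0) :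
    0 < z ⬝ᵥ M *ᵥ z := by
  obtain ⟨w, hw, hzw⟩ := exists_mem_sphere_dotProduct_mulVec_eq M hz
  rw [hzw]
  exact mul_pos (by positivity) (h w hw)

lemma posSemidef_of_forall_sphere {M : Matrix ι ι ℝ} (hM : M.IsSymm)
    (h : ∀ w ∈ sphere (0 : ι → ℝ) 1, 0 ≤ w ⬝ᵥ M *ᵥ w) : M.PosSemidef := by
  refine .of_dotProduct_mulVec_nonneg (isHermitian_iff_isSymm.mpr hM) fun z => ?_
  rw [star_trivial]
  rcases eq_or_ne z 0 with rfl | hz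
  · simp
  obtain ⟨w, hw, hzw⟩ := exists_mem_sphere_dotProduct_mulVec_eq M hz
  rw [hzw]
  exact mul_nonneg (by positivity) (h w hw)

lemma PosDef.fromBlocks_zero {m n : Type*} [Fintype m] [Fintype n]
    {A : Matrix m m ℝ} {D : Matrix n n ℝ} (hA : A.PosDef) (hD : D.PosDef) :
    (fromBlocks A 0 0 D).PosDef := by
  refine .of_dotProduct_mulVec_pos (hA.isHermitian.fromBlocks (by simp) hD.isHermitian)
    fun z hz => ?_
  obtain ⟨x, y, rfl⟩ : ∃ x y, z = Sum.elim x y := ⟨_, _, (Sum.elim_comp_inl_inr z).symm⟩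
  rw [star_trivial, fromBlocks_mulVec, sumElim_dotProduct_sumElim]
  simp only [zero_mulVec, add_zero, zero_add, Sum.elim_comp_inl, Sum.elim_comp_inr]
  rcases eq_or_ne x 0 with rfl | hx
  · have hy : y ≠ 0 := by rintro rfl; exact hz Sum.elim_zero_zero
    simpa using hD.dotProduct_mulVec_pos hy
  · have hAx := hA.dotProduct_mulVec_pos hx
    have hDy := hD.posSemidef.dotProduct_mulVec_nonneg y
    rw [star_trivial] at hAx hDy
    linarith

lemma PosDef.eventually_dotProduct_mulVec_sq_smul_add_pos {P : Matrix ι ι ℝ} (hP : P.PosDef)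
    (B C : Matrix ι ι ℝ) :
    ∀ᶠ s : ℝ in atTop, ∀ z ≠ 0, 0 < z ⬝ᵥ (s ^ 2 • P + s • B + C) *ᵥ z := by
  have hS : IsCompact (sphere (0 : ι → ℝ) 1) := isCompact_sphere 0 1
  obtain ⟨α, hα, hPα⟩ := hS.exists_forall_le' (f := fun z : ι → ℝ => z ⬝ᵥ P *ᵥ z) (a := 0)
    (by fun_prop) fun z hz => by
      simpa using hP.dotProduct_mulVec_pos (ne_zero_of_mem_unit_sphere ⟨z, hz⟩)
  obtain ⟨β, hβ⟩ := hS.exists_bound_of_continuousOn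
    (f := fun z : ι → ℝ => z ⬝ᵥ B *ᵥ z) (by fun_prop)
  obtain ⟨γ, hγ⟩ := hS.exists_bound_of_continuousOn
    (f := fun z : ι → ℝ => z ⬝ᵥ C *ᵥ z) (by fun_prop)
  filter_upwards [eventually_ge_atTop (1 + (|β| + |γ|) / α)] with s hs z hz
  refine dotProduct_mulVec_pos_of_forall_sphere (fun w hw => ?_) hz
  have hB := abs_le.mp ((Real.norm_eq_abs _ ▸ hβ w hw).trans (le_abs_self β))
  have hC := abs_le.mp ((Real.norm_eq_abs _ ▸ hγ w hw).trans (le_abs_self γ))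
  have hPw := hPα w hw
  have hsα : |β| + |γ| ≤ (s - 1) * α := by
    rw [← div_le_iff₀ hα]; linarith
  simp only [add_mulVec, smul_mulVec, dotProduct_add, dotProduct_smul, smul_eq_mul]
  have hs1 : 1 ≤ s := le_trans (le_add_of_nonneg_right (by positivity)) hs
  nlinarith [mul_nonneg (sq_nonneg s) (sub_nonneg.mpr hPw),
    mul_nonneg (zero_le_one.trans hs1) (neg_le_iff_add_nonneg.mp hB.1),
    mul_nonneg (sub_nonneg.mpr hs1) (show 0 ≤ s * α - |β| by nlinarith [abs_nonneg γ])]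

theorem exists_mem_Ioo_det_eq_zero [DecidableEq ι] {A : ℝ → Matrix ι ι ℝ} (hA : Continuous A)
    (hsymm : ∀ t, (A t).IsSymm) {a b : ℝ} (hab : a ≤ b) {z : ι → ℝ}
    (hneg : z ⬝ᵥ A a *ᵥ z < 0) (hpos : ∀ z ≠ 0, 0 < z ⬝ᵥ A b *ᵥ z) :
    ∃ c ∈ Ioo a b, (A c).det = 0 := by
  set S := sphere (0 : ι → ℝ) 1
  have hS : IsCompact S := isCompact_sphere 0 1
  have hz : z ≠ 0 := by rintro rfl; simp at hneg
  obtain ⟨w₀, hw₀, hzw₀⟩ := exists_mem_sphere_dotProduct_mulVec_eq (A a) hz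
  set g : ℝ → ℝ := fun t => sInf ((fun w => w ⬝ᵥ A t *ᵥ w) '' S)
  have hg : Continuous g :=
    hS.continuous_sInf (f := fun t w => w ⬝ᵥ A t *ᵥ w) (by fun_prop)
  have hQ : ∀ t, Continuous fun w : ι → ℝ => w ⬝ᵥ A t *ᵥ w := fun t => by fun_prop
  have hg_le : ∀ t, ∀ w ∈ S, g t ≤ w ⬝ᵥ A t *ᵥ w := fun t w hw =>
    csInf_le (hS.image (hQ t)).bddBelow (mem_image_of_mem _ hw)
  have hg_mem : ∀ t, ∃ w ∈ S, w ⬝ᵥ A t *ᵥ w = g t := fun t =>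
    (hS.image (hQ t)).sInf_mem (Set.Nonempty.image _ ⟨w₀, hw₀⟩)
  have hga : g a < 0 := by
    refine (hg_le a w₀ hw₀).trans_lt (neg_of_mul_neg_right ?_ (sq_nonneg ‖z‖))
    rwa [← hzw₀]
  have hgb : 0 < g b := by
    obtain ⟨w, hw, hwg⟩ := hg_mem b
    exact hwg ▸ hpos w (ne_zero_of_mem_unit_sphere ⟨w, hw⟩)
  obtain ⟨c, hc, hgc⟩ := intermediate_value_Icc hab hg.continuousOn ⟨hga.le, hgb.le⟩
  refine ⟨c, ⟨hc.1.lt_of_ne ?_, hc.2.lt_of_ne ?_⟩, ?_⟩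
  · rintro rfl; exact hga.ne hgc
  · rintro rfl; exact hgb.ne' hgc
  obtain ⟨w, hw, hwg⟩ := hg_mem c
  have hpsd : (A c).PosSemidef :=
    posSemidef_of_forall_sphere (hsymm c) fun v hv => hgc ▸ hg_le c v hv
  have hker : A c *ᵥ w = 0 :=
    (hpsd.dotProduct_mulVec_zero_iff w).mp (by rw [star_trivial, hwg, hgc])
  exact exists_mulVec_eq_zero_iff.mp ⟨w, ne_zero_of_mem_unit_sphere ⟨w, hw⟩, hker⟩

end Matrix

section BPAM

variable {n m : Type*}
  (H₁ F₁₁ : Matrix n n ℝ) (H₂ F₂₂ : Matrix m m ℝ) (F₁₂ : Matrix n m ℝ) (η : ℝ)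

noncomputable def bpamMatrix (μ : ℝ) : Matrix (n ⊕ m) (n ⊕ m) ℝ :=
  fromBlocks ((μ - 1) • H₁ + (μ * η) • F₁₁) ((Real.sqrt μ * η) • F₁₂)
    ((Real.sqrt μ * η) • F₁₂ᵀ) ((μ - 1) • H₂ + (μ * η) • F₂₂)

theorem continuous_bpamMatrix : Continuous (bpamMatrix H₁ F₁₁ H₂ F₂₂ F₁₂ η) := by
  unfold bpamMatrix
  fun_prop

variable {H₁ F₁₁ H₂ F₂₂} in
theorem bpamMatrix_isSymm (hH₁ : H₁.IsSymm) (hF₁₁ : F₁₁.IsSymm) (hH₂ : H₂.IsSymm)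
    (hF₂₂ : F₂₂.IsSymm) (μ : ℝ) : (bpamMatrix H₁ F₁₁ H₂ F₂₂ F₁₂ η μ).IsSymm :=
  ((hH₁.smul _).add (hF₁₁.smul _)).fromBlocks (by rw [transpose_smul])
    ((hH₂.smul _).add (hF₂₂.smul _))

theorem bpamMatrix_one :
    bpamMatrix H₁ F₁₁ H₂ F₂₂ F₁₂ η 1 = η • fromBlocks F₁₁ F₁₂ F₁₂ᵀ F₂₂ := by
  simp [bpamMatrix, fromBlocks_smul]

theorem bpamMatrix_sq {s : ℝ} (hs : 0 ≤ s) :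
    bpamMatrix H₁ F₁₁ H₂ F₂₂ F₁₂ η (s ^ 2) =
      s ^ 2 • fromBlocks (H₁ + η • F₁₁) 0 0 (H₂ + η • F₂₂) +
        s • fromBlocks 0 (η • F₁₂) (η • F₁₂ᵀ) 0 + fromBlocks (-H₁) 0 0 (-H₂) := by
  simp only [bpamMatrix, Real.sqrt_sq hs, fromBlocks_smul, fromBlocks_add]
  congr 1 <;> module

end BPAM

theorem bpam_strict_saddle_unstable_general
    (n m : ℕ)
    (H₁ F₁₁ : Matrix (Fin n) (Fin n) ℝ) (H₂ F₂₂ : Matrix (Fin m) (Fin m) ℝ)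
    (F₁₂ : Matrix (Fin n) (Fin m) ℝ)
    (hH₁symm : H₁.IsSymm) (hF₁₁symm : F₁₁.IsSymm)
    (hH₂symm : H₂.IsSymm) (hF₂₂symm : F₂₂.IsSymm)
    (η : ℝ) (hη : 0 < η)
    (hpd₁ : (H₁ + η • F₁₁).PosDef) (hpd₂ : (H₂ + η • F₂₂).PosDef)
    (hFneg : ∃ z : (Fin n ⊕ Fin m) → ℝ, z ≠ 0 ∧
      z ⬝ᵥ ((Matrix.fromBlocks F₁₁ F₁₂ F₁₂ᵀ F₂₂) *ᵥ z) < 0) :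
    ∃ μ : ℝ, 1 < μ ∧
      (Matrix.fromBlocks
        ((μ - 1) • H₁ + (μ * η) • F₁₁) ((Real.sqrt μ * η) • F₁₂)
        ((Real.sqrt μ * η) • F₁₂ᵀ) ((μ - 1) • H₂ + (μ * η) • F₂₂)).det = 0 := by
  obtain ⟨z, -, hz⟩ := hFneg
  have hneg : z ⬝ᵥ bpamMatrix H₁ F₁₁ H₂ F₂₂ F₁₂ η 1 *ᵥ z < 0 := by
    rw [bpamMatrix_one, smul_mulVec, dotProduct_smul, smul_eq_mul]
    exact mul_neg_of_pos_of_neg hη hz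
  have hlarge := (PosDef.fromBlocks_zero hpd₁ hpd₂).eventually_dotProduct_mulVec_sq_smul_add_pos
    (fromBlocks 0 (η • F₁₂) (η • F₁₂ᵀ) 0) (fromBlocks (-H₁) 0 0 (-H₂))
  obtain ⟨s, hpos, hs⟩ := (hlarge.and (eventually_gt_atTop 1)).exists
  rw [← bpamMatrix_sq _ _ _ _ _ _ (zero_le_one.trans hs.le)] at hpos
  obtain ⟨μ, hμ, hdet⟩ := exists_mem_Ioo_det_eq_zero (continuous_bpamMatrix H₁ F₁₁ H₂ F₂₂ F₁₂ η)
    (bpamMatrix_isSymm F₁₂ η hH₁symm hF₁₁symm hH₂symm hF₂₂symm)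
    (by nlinarith) hneg hpos
  exact ⟨μ, hμ.1, hdet⟩

/-- **Key matrix lemma for B-PAM: strict saddles are unstable fixed points.**
With `H₁, F₁₁, H₂, F₂₂` symmetric, `η > 0`, `H₁ + ηF₁₁` and `H₂ + ηF₂₂` positive
definite, and the block matrix `F = [[F₁₁, F₁₂], [F₁₂ᵀ, F₂₂]]` having a negative
direction, there is `μ > 1` making the block matrix
`J(μ) = [[(μ−1)H₁ + μηF₁₁, √μ η F₁₂], [√μ η F₁₂ᵀ, (μ−1)H₂ + μηF₂₂]]` singular. -/
theorem bpam_strict_saddle_unstable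
    (n m : ℕ) (hn : 1 ≤ n) (hm : 1 ≤ m)
    (H₁ F₁₁ : Matrix (Fin n) (Fin n) ℝ) (H₂ F₂₂ : Matrix (Fin m) (Fin m) ℝ)
    (F₁₂ : Matrix (Fin n) (Fin m) ℝ)
    (hH₁symm : H₁.IsSymm) (hF₁₁symm : F₁₁.IsSymm)
    (hH₂symm : H₂.IsSymm) (hF₂₂symm : F₂₂.IsSymm)
    (η : ℝ) (hη : 0 < η)
    (hpd₁ : (H₁ + η • F₁₁).PosDef) (hpd₂ : (H₂ + η • F₂₂).PosDef)
    (hFneg : ∃ z : (Fin n ⊕ Fin m) → ℝ, z ≠ 0 ∧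
      z ⬝ᵥ ((Matrix.fromBlocks F₁₁ F₁₂ F₁₂ᵀ F₂₂) *ᵥ z) < 0) :
    ∃ μ : ℝ, 1 < μ ∧
      (Matrix.fromBlocks
        ((μ - 1) • H₁ + (μ * η) • F₁₁) ((Real.sqrt μ * η) • F₁₂)
        ((Real.sqrt μ * η) • F₁₂ᵀ) ((μ - 1) • H₂ + (μ * η) • F₂₂)).det = 0 :=
  bpam_strict_saddle_unstable_general n m H₁ F₁₁ H₂ F₂₂ F₁₂ hH₁symm hF₁₁symm hH₂symm hF₂₂symm η hη
    hpd₁ hpd₂ hFneg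
end
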